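/- arXiv:2602.08782 — 2 statements merged into one kernel-verified Lean document; each statement's English description precedes it below -/
import Mathlib

section
/- In the infinite-dataset limit, the PP-AVI objective satisfies: E_{p(D)}[ log q(Y_t|D_c, X_t) + ELBO(D_c) ] = H(Y_t|D_c, X_t) + H(Y_c|X_c) − E_{p(D_c,X_t)}[KL[p(Y_t|D_c,X_t) ‖ q(Y_t|D_c,X_t)]] − E_{p(X_c)}[KL[p(Y_c|X_c) ‖ p_Ψ(Y_c|X_c)]] − E_{p(D_c)}[KL[q(W|D_c) ‖ p_Ψ(W|D_c)]], where the entropies are constants independent of the model. Hence maximising the PP-AVI objective is equivalent to minimising the sum of the three expected KL divergences. -/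
/-! Expanding `log (p / q) = log p - log q` inside each KL term and using linearity of the
expectation under the data distribution, both sides become the same combination of the
expectations of `log p(Y_t|D_c,X_t)`, `log p(Y_c|X_c)`, `log q(Y_t|D_c,X_t)`,
`log p_Ψ(Y_c|X_c)` and `KL[q(W|D_c) ‖ p_Ψ(W|D_c)]`. The entropy terms do not depend on the
model, so comparing two objectives is the same as comparing their KL sums. -/

open MeasureTheory

variable {Xc Yc Xt Yt : Type*} [MeasurableSpace Xc] [MeasurableSpace Yc]
  [MeasurableSpace Xt] [MeasurableSpace Yt]

/-- Expectation of `f(xc, yc, xt, yt)` under the joint data-generating density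
`J(xc, yc, xt, yt) = p(xc) p(yc|xc) p(xt|Dc) p(yt|Dc, xt)` (w.r.t. the product of the
base measures), where a dataset is `D = (D_c, X_t, Y_t)` with context `D_c = (xc, yc)`. -/
noncomputable def Ejoint (μXc : Measure Xc) (μYc : Measure Yc) (μXt : Measure Xt)
    (μYt : Measure Yt)
    (pXc : Xc → ℝ) (pYc : Xc → Yc → ℝ) (pXt : Xc → Yc → Xt → ℝ)
    (pYt : Xc → Yc → Xt → Yt → ℝ) (f : Xc → Yc → Xt → Yt → ℝ) : ℝ :=
  ∫ z : Xc × Yc × Xt × Yt,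
      (pXc z.1 * pYc z.1 z.2.1 * pXt z.1 z.2.1 z.2.2.1
        * pYt z.1 z.2.1 z.2.2.1 z.2.2.2) * f z.1 z.2.1 z.2.2.1 z.2.2.2
    ∂(μXc.prod (μYc.prod (μXt.prod μYt)))

section Ejoint

variable (μXc : Measure Xc) (μYc : Measure Yc) (μXt : Measure Xt) (μYt : Measure Yt)
  (pXc : Xc → ℝ) (pYc : Xc → Yc → ℝ) (pXt : Xc → Yc → Xt → ℝ) (pYt : Xc → Yc → Xt → Yt → ℝ)

def IntegrableJoint (f : Xc → Yc → Xt → Yt → ℝ) : Prop :=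
  Integrable
    (fun z : Xc × Yc × Xt × Yt =>
      (pXc z.1 * pYc z.1 z.2.1 * pXt z.1 z.2.1 z.2.2.1
        * pYt z.1 z.2.1 z.2.2.1 z.2.2.2) * f z.1 z.2.1 z.2.2.1 z.2.2.2)
    (μXc.prod (μYc.prod (μXt.prod μYt)))

variable {μXc μYc μXt μYt pXc pYc pXt pYt} {f g : Xc → Yc → Xt → Yt → ℝ}

theorem IntegrableJoint.sub (hf : IntegrableJoint μXc μYc μXt μYt pXc pYc pXt pYt f)
    (hg : IntegrableJoint μXc μYc μXt μYt pXc pYc pXt pYt g) :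
    IntegrableJoint μXc μYc μXt μYt pXc pYc pXt pYt (fun a b c d => f a b c d - g a b c d) := by
  unfold IntegrableJoint
  simp only [mul_sub]
  exact Integrable.sub hf hg

theorem Ejoint_add (hf : IntegrableJoint μXc μYc μXt μYt pXc pYc pXt pYt f)
    (hg : IntegrableJoint μXc μYc μXt μYt pXc pYc pXt pYt g) :
    Ejoint μXc μYc μXt μYt pXc pYc pXt pYt (fun a b c d => f a b c d + g a b c d)
      = Ejoint μXc μYc μXt μYt pXc pYc pXt pYt f
        + Ejoint μXc μYc μXt μYt pXc pYc pXt pYt g := by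
  unfold Ejoint
  simp only [mul_add]
  exact integral_add hf hg

theorem Ejoint_sub (hf : IntegrableJoint μXc μYc μXt μYt pXc pYc pXt pYt f)
    (hg : IntegrableJoint μXc μYc μXt μYt pXc pYc pXt pYt g) :
    Ejoint μXc μYc μXt μYt pXc pYc pXt pYt (fun a b c d => f a b c d - g a b c d)
      = Ejoint μXc μYc μXt μYt pXc pYc pXt pYt f
        - Ejoint μXc μYc μXt μYt pXc pYc pXt pYt g := by
  unfold Ejoint
  simp only [mul_sub]
  exact integral_sub hf hg

theorem Ejoint_log_div {p q : Xc → Yc → Xt → Yt → ℝ}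
    (hp : ∀ a b c d, 0 < p a b c d) (hq : ∀ a b c d, 0 < q a b c d)
    (hp_int : IntegrableJoint μXc μYc μXt μYt pXc pYc pXt pYt
      (fun a b c d => Real.log (p a b c d)))
    (hq_int : IntegrableJoint μXc μYc μXt μYt pXc pYc pXt pYt
      (fun a b c d => Real.log (q a b c d))) :
    Ejoint μXc μYc μXt μYt pXc pYc pXt pYt (fun a b c d => Real.log (p a b c d / q a b c d))
      = Ejoint μXc μYc μXt μYt pXc pYc pXt pYt (fun a b c d => Real.log (p a b c d))
        - Ejoint μXc μYc μXt μYt pXc pYc pXt pYt (fun a b c d => Real.log (q a b c d)) := by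
  have hsplit : (fun a b c d => Real.log (p a b c d / q a b c d))
      = fun a b c d => Real.log (p a b c d) - Real.log (q a b c d) := by
    funext a b c d
    exact Real.log_div (hp a b c d).ne' (hq a b c d).ne'
  rw [hsplit, Ejoint_sub hp_int hq_int]

theorem Ejoint_ppavi_objective {qpred : Xc → Yc → Xt → Yt → ℝ} {pΨ KLW : Xc → Yc → ℝ}
    (hpYc : ∀ a b, 0 < pYc a b) (hpYt : ∀ a b c d, 0 < pYt a b c d)
    (hqpred : ∀ a b c d, 0 < qpred a b c d) (hpΨ : ∀ a b, 0 < pΨ a b)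
    (hpYt_int : IntegrableJoint μXc μYc μXt μYt pXc pYc pXt pYt
      (fun a b c d => Real.log (pYt a b c d)))
    (hpYc_int : IntegrableJoint μXc μYc μXt μYt pXc pYc pXt pYt
      (fun a b _ _ => Real.log (pYc a b)))
    (hqpred_int : IntegrableJoint μXc μYc μXt μYt pXc pYc pXt pYt
      (fun a b c d => Real.log (qpred a b c d)))
    (hpΨ_int : IntegrableJoint μXc μYc μXt μYt pXc pYc pXt pYt
      (fun a b _ _ => Real.log (pΨ a b)))
    (hKLW_int : IntegrableJoint μXc μYc μXt μYt pXc pYc pXt pYt (fun a b _ _ => KLW a b)) :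
    Ejoint μXc μYc μXt μYt pXc pYc pXt pYt
        (fun a b c d => Real.log (qpred a b c d) + (Real.log (pΨ a b) - KLW a b))
      = Ejoint μXc μYc μXt μYt pXc pYc pXt pYt (fun a b c d => Real.log (pYt a b c d))
        + Ejoint μXc μYc μXt μYt pXc pYc pXt pYt (fun a b _ _ => Real.log (pYc a b))
        - Ejoint μXc μYc μXt μYt pXc pYc pXt pYt
            (fun a b c d => Real.log (pYt a b c d / qpred a b c d))
        - Ejoint μXc μYc μXt μYt pXc pYc pXt pYt (fun a b _ _ => Real.log (pYc a b / pΨ a b))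
        - Ejoint μXc μYc μXt μYt pXc pYc pXt pYt (fun a b _ _ => KLW a b) := by
  rw [Ejoint_add hqpred_int (hpΨ_int.sub hKLW_int), Ejoint_sub hpΨ_int hKLW_int,
    Ejoint_log_div hpYt hqpred hpYt_int hqpred_int,
    Ejoint_log_div (fun a b _ _ => hpYc a b) (fun a b _ _ => hpΨ a b) hpYc_int hpΨ_int]
  ring

end Ejoint

theorem ppavi_decomposition_general
    (μXc : Measure Xc) (μYc : Measure Yc) (μXt : Measure Xt) (μYt : Measure Yt)
    -- true data-generating process densities:
    (pXc : Xc → ℝ) (pYc : Xc → Yc → ℝ) (pXt : Xc → Yc → Xt → ℝ)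
    (pYt : Xc → Yc → Xt → Yt → ℝ)
    (hpYc : ∀ a b, 0 < pYc a b)
    (hpYt : ∀ a b c d, 0 < pYt a b c d)
    -- two models: posterior predictive `qpred`, marginal likelihood `pΨ`, and the
    -- weight-space divergence `KLW (D_c) = KL[q(W|D_c) ‖ p_Ψ(W|D_c)] ≥ 0`:
    (qpred qpred' : Xc → Yc → Xt → Yt → ℝ) (pΨ pΨ' : Xc → Yc → ℝ)
    (KLW KLW' : Xc → Yc → ℝ)
    (hqpred : ∀ a b c d, 0 < qpred a b c d) (hqpred' : ∀ a b c d, 0 < qpred' a b c d)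
    (hpΨ : ∀ a b, 0 < pΨ a b) (hpΨ' : ∀ a b, 0 < pΨ' a b)
    -- all expectations below are finite:
    (hfin : ∀ f ∈ ({fun a b c d => Real.log (pYt a b c d),
        fun a b c d => Real.log (pYc a b),
        fun a b c d => Real.log (qpred a b c d),
        fun a b c d => Real.log (qpred' a b c d),
        fun a b c d => Real.log (pΨ a b), fun a b c d => Real.log (pΨ' a b),
        fun a b c d => KLW a b, fun a b c d => KLW' a b} :
          Set (Xc → Yc → Xt → Yt → ℝ)),
      Integrable
        (fun z : Xc × Yc × Xt × Yt =>
          (pXc z.1 * pYc z.1 z.2.1 * pXt z.1 z.2.1 z.2.2.1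
            * pYt z.1 z.2.1 z.2.2.1 z.2.2.2) * f z.1 z.2.1 z.2.2.1 z.2.2.2)
        (μXc.prod (μYc.prod (μXt.prod μYt)))) :
    (Ejoint μXc μYc μXt μYt pXc pYc pXt pYt
        (fun a b c d => Real.log (qpred a b c d) + (Real.log (pΨ a b) - KLW a b))
      = Ejoint μXc μYc μXt μYt pXc pYc pXt pYt
          (fun a b c d => Real.log (pYt a b c d))
        + Ejoint μXc μYc μXt μYt pXc pYc pXt pYt
            (fun a b c d => Real.log (pYc a b))
        - Ejoint μXc μYc μXt μYt pXc pYc pXt pYt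
            (fun a b c d => Real.log (pYt a b c d / qpred a b c d))
        - Ejoint μXc μYc μXt μYt pXc pYc pXt pYt
            (fun a b c d => Real.log (pYc a b / pΨ a b))
        - Ejoint μXc μYc μXt μYt pXc pYc pXt pYt (fun a b c d => KLW a b))
    ∧ ((Ejoint μXc μYc μXt μYt pXc pYc pXt pYt
          (fun a b c d => Real.log (qpred a b c d) + (Real.log (pΨ a b) - KLW a b))
        ≥ Ejoint μXc μYc μXt μYt pXc pYc pXt pYt
            (fun a b c d => Real.log (qpred' a b c d) + (Real.log (pΨ' a b) - KLW' a b)))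
      ↔ (Ejoint μXc μYc μXt μYt pXc pYc pXt pYt
            (fun a b c d => Real.log (pYt a b c d / qpred a b c d))
          + Ejoint μXc μYc μXt μYt pXc pYc pXt pYt
              (fun a b c d => Real.log (pYc a b / pΨ a b))
          + Ejoint μXc μYc μXt μYt pXc pYc pXt pYt (fun a b c d => KLW a b)
        ≤ Ejoint μXc μYc μXt μYt pXc pYc pXt pYt
              (fun a b c d => Real.log (pYt a b c d / qpred' a b c d))
          + Ejoint μXc μYc μXt μYt pXc pYc pXt pYt
              (fun a b c d => Real.log (pYc a b / pΨ' a b))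
          + Ejoint μXc μYc μXt μYt pXc pYc pXt pYt (fun a b c d => KLW' a b))) := by
  have hYt := hfin (fun a b c d => Real.log (pYt a b c d)) (by simp)
  have hYc := hfin (fun a b _ _ => Real.log (pYc a b)) (by simp)
  have hq := hfin (fun a b c d => Real.log (qpred a b c d)) (by simp)
  have hq' := hfin (fun a b c d => Real.log (qpred' a b c d)) (by simp)
  have hΨ := hfin (fun a b _ _ => Real.log (pΨ a b)) (by simp)
  have hΨ' := hfin (fun a b _ _ => Real.log (pΨ' a b)) (by simp)
  have hK := hfin (fun a b _ _ => KLW a b) (by simp)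
  have hK' := hfin (fun a b _ _ => KLW' a b) (by simp)
  have hobj := Ejoint_ppavi_objective hpYc hpYt hqpred hpΨ hYt hYc hq hΨ hK
  have hobj' := Ejoint_ppavi_objective hpYc hpYt hqpred' hpΨ' hYt hYc hq' hΨ' hK'
  refine ⟨hobj, ?_⟩
  rw [hobj, hobj']
  constructor <;> intro _ <;> linarith

/-- In the infinite-dataset limit the PP-AVI objective satisfies
`E_{p(D)}[log q(Y_t|D_c, X_t) + ELBO(D_c)]
  = H(Y_t|D_c, X_t) + H(Y_c|X_c)
    − E[KL[p(Y_t|D_c,X_t) ‖ q(Y_t|D_c,X_t)]]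
    − E[KL[p(Y_c|X_c) ‖ p_Ψ(Y_c|X_c)]]
    − E[KL[q(W|D_c) ‖ p_Ψ(W|D_c)]]`,
with `ELBO(D_c) = log p_Ψ(Y_c|X_c) − KL[q(W|D_c) ‖ p_Ψ(W|D_c)]` and where, following
the paper's convention, the model-independent entropy constants are
`H(Y_t|D_c,X_t) = E[log p(Y_t|D_c,X_t)]` and `H(Y_c|X_c) = E[log p(Y_c|X_c)]`.
Hence (second conjunct) maximising the PP-AVI objective is equivalent to minimising
the sum of the three expected KL divergences: for two models the objectives and the
KL sums compare in opposite directions. -/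
theorem ppavi_decomposition
    (μXc : Measure Xc) (μYc : Measure Yc) (μXt : Measure Xt) (μYt : Measure Yt)
    [SigmaFinite μXc] [SigmaFinite μYc] [SigmaFinite μXt] [SigmaFinite μYt]
    -- true data-generating process densities:
    (pXc : Xc → ℝ) (pYc : Xc → Yc → ℝ) (pXt : Xc → Yc → Xt → ℝ)
    (pYt : Xc → Yc → Xt → Yt → ℝ)
    (hpXc : ∀ a, 0 ≤ pXc a) (hpYc : ∀ a b, 0 < pYc a b)
    (hpXt : ∀ a b c, 0 ≤ pXt a b c) (hpYt : ∀ a b c d, 0 < pYt a b c d)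
    (hnXc : ∫ a, pXc a ∂μXc = 1) (hnYc : ∀ a, ∫ b, pYc a b ∂μYc = 1)
    (hnXt : ∀ a b, ∫ c, pXt a b c ∂μXt = 1)
    (hnYt : ∀ a b c, ∫ d, pYt a b c d ∂μYt = 1)
    -- two models: posterior predictive `qpred`, marginal likelihood `pΨ`, and the
    -- weight-space divergence `KLW (D_c) = KL[q(W|D_c) ‖ p_Ψ(W|D_c)] ≥ 0`:
    (qpred qpred' : Xc → Yc → Xt → Yt → ℝ) (pΨ pΨ' : Xc → Yc → ℝ)
    (KLW KLW' : Xc → Yc → ℝ)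
    (hqpred : ∀ a b c d, 0 < qpred a b c d) (hqpred' : ∀ a b c d, 0 < qpred' a b c d)
    (hpΨ : ∀ a b, 0 < pΨ a b) (hpΨ' : ∀ a b, 0 < pΨ' a b)
    (hKLW : ∀ a b, 0 ≤ KLW a b) (hKLW' : ∀ a b, 0 ≤ KLW' a b)
    -- all expectations below are finite:
    (hfin : ∀ f ∈ ({fun a b c d => Real.log (pYt a b c d),
        fun a b c d => Real.log (pYc a b),
        fun a b c d => Real.log (qpred a b c d),
        fun a b c d => Real.log (qpred' a b c d),
        fun a b c d => Real.log (pΨ a b), fun a b c d => Real.log (pΨ' a b),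
        fun a b c d => KLW a b, fun a b c d => KLW' a b} :
          Set (Xc → Yc → Xt → Yt → ℝ)),
      Integrable
        (fun z : Xc × Yc × Xt × Yt =>
          (pXc z.1 * pYc z.1 z.2.1 * pXt z.1 z.2.1 z.2.2.1
            * pYt z.1 z.2.1 z.2.2.1 z.2.2.2) * f z.1 z.2.1 z.2.2.1 z.2.2.2)
        (μXc.prod (μYc.prod (μXt.prod μYt)))) :
    (Ejoint μXc μYc μXt μYt pXc pYc pXt pYt
        (fun a b c d => Real.log (qpred a b c d) + (Real.log (pΨ a b) - KLW a b))
      = Ejoint μXc μYc μXt μYt pXc pYc pXt pYt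
          (fun a b c d => Real.log (pYt a b c d))
        + Ejoint μXc μYc μXt μYt pXc pYc pXt pYt
            (fun a b c d => Real.log (pYc a b))
        - Ejoint μXc μYc μXt μYt pXc pYc pXt pYt
            (fun a b c d => Real.log (pYt a b c d / qpred a b c d))
        - Ejoint μXc μYc μXt μYt pXc pYc pXt pYt
            (fun a b c d => Real.log (pYc a b / pΨ a b))
        - Ejoint μXc μYc μXt μYt pXc pYc pXt pYt (fun a b c d => KLW a b))
    ∧ ((Ejoint μXc μYc μXt μYt pXc pYc pXt pYt
          (fun a b c d => Real.log (qpred a b c d) + (Real.log (pΨ a b) - KLW a b))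
        ≥ Ejoint μXc μYc μXt μYt pXc pYc pXt pYt
            (fun a b c d => Real.log (qpred' a b c d) + (Real.log (pΨ' a b) - KLW' a b)))
      ↔ (Ejoint μXc μYc μXt μYt pXc pYc pXt pYt
            (fun a b c d => Real.log (pYt a b c d / qpred a b c d))
          + Ejoint μXc μYc μXt μYt pXc pYc pXt pYt
              (fun a b c d => Real.log (pYc a b / pΨ a b))
          + Ejoint μXc μYc μXt μYt pXc pYc pXt pYt (fun a b c d => KLW a b)
        ≤ Ejoint μXc μYc μXt μYt pXc pYc pXt pYt
              (fun a b c d => Real.log (pYt a b c d / qpred' a b c d))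
          + Ejoint μXc μYc μXt μYt pXc pYc pXt pYt
              (fun a b c d => Real.log (pYc a b / pΨ' a b))
          + Ejoint μXc μYc μXt μYt pXc pYc pXt pYt (fun a b c d => KLW' a b))) :=
  ppavi_decomposition_general μXc μYc μXt μYt pXc pYc pXt pYt hpYc hpYt qpred qpred' pΨ pΨ' KLW KLW'
    hqpred hqpred' hpΨ hpΨ' hfin
end

section
/- The TELL-AVI and PP-AVI objectives differ by an expected KL divergence between partial-data and full-data approximate posteriors: E_{q(W|D_c)}[log p(Y_t|W, X_t)] = log q(Y_t|D_c, X_t) − KL[q(W|D_c) ‖ q(W|D)], where q(W|D) ∝ p(Y_t|W, X_t) q(W|D_c) is the approximate posterior updated with the targets; hence in the infinite-task limit lim ℒ_TELL-AVI = lim ℒ_PP-AVI − E_{p(D)}[KL[q(W|D_c) ‖ q(W|D)]]. -/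
open MeasureTheory

/-- For each task, with `qc = q(W|D_c)` a positive density over
weights, target likelihood `L(w) = p(Y_t|w, X_t) > 0`, posterior predictive
`Z = q(Y_t|D_c, X_t) = ∫ L qc`, and updated posterior `qd = q(W|D) = L qc / Z`,
the TELL term satisfies
`E_{qc}[log L] = log Z − KL[qc ‖ qd]` (first conjunct); hence, taking expectations
over the task distribution `P = p(D)` (the infinite-task limit of the objectives),
`lim ℒ_TELL-AVI = lim ℒ_PP-AVI − E_{p(D)}[KL[q(W|D_c) ‖ q(W|D)]]`, i.e. the expected
TELL term equals the expected log-posterior-predictive term minus the expected KL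
(second conjunct; the common `ℒ_AVI` part of both objectives cancels). -/
theorem tell_avi_vs_pp_avi
    {Ω T : Type*} [MeasurableSpace Ω] [MeasurableSpace T]
    (μ : Measure Ω) [SigmaFinite μ] (P : Measure T) [IsProbabilityMeasure P]
    (qc L : T → Ω → ℝ)
    (hqc : ∀ t w, 0 < qc t w) (hL : ∀ t w, 0 < L t w)
    (hqcnorm : ∀ t, ∫ w, qc t w ∂μ = 1)
    (Z : T → ℝ) (hZ : ∀ t, Z t = ∫ w, L t w * qc t w ∂μ) (hZpos : ∀ t, 0 < Z t)
    (qd : T → Ω → ℝ) (hqd : ∀ t w, qd t w = L t w * qc t w / Z t)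
    (hint : ∀ t, Integrable (fun w => qc t w * Real.log (L t w)) μ)
    (hintT₁ : Integrable (fun t => ∫ w, qc t w * Real.log (L t w) ∂μ) P)
    (hintT₂ : Integrable (fun t => Real.log (Z t)) P)
    (hintT₃ : Integrable (fun t => ∫ w, qc t w * Real.log (qc t w / qd t w) ∂μ) P) :
    (∀ t, ∫ w, qc t w * Real.log (L t w) ∂μ
        = Real.log (Z t) - ∫ w, qc t w * Real.log (qc t w / qd t w) ∂μ)
    ∧ (∫ t, (∫ w, qc t w * Real.log (L t w) ∂μ) ∂P
        = (∫ t, Real.log (Z t) ∂P)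
          - ∫ t, (∫ w, qc t w * Real.log (qc t w / qd t w) ∂μ) ∂P) := by
  have h1 : ∀ t, ∫ w, qc t w * Real.log (L t w) ∂μ
      = Real.log (Z t) - ∫ w, qc t w * Real.log (qc t w / qd t w) ∂μ := by
    intro t
    have hqci : Integrable (fun w => qc t w) μ := by
      by_contra h
      have h1 := hqcnorm t
      rw [integral_undef h] at h1
      exact one_ne_zero h1.symm
    have hratio : ∀ w, qc t w / qd t w = Z t / L t w := by
      intro w
      rw [hqd]
      field_simp [(hqc t w).ne', (hL t w).ne', (hZpos t).ne']
    have hkey : ∀ w, qc t w * Real.log (qc t w / qd t w)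
        = qc t w * Real.log (Z t) - qc t w * Real.log (L t w) := by
      intro w
      rw [hratio, Real.log_div (hZpos t).ne' (hL t w).ne', mul_sub]
    rw [integral_congr_ae (Filter.Eventually.of_forall hkey),
      integral_sub (hqci.mul_const _) (hint t), integral_mul_const,
      hqcnorm t, one_mul]
    ring
  refine ⟨h1, ?_⟩
  rw [← integral_sub hintT₂ hintT₃]
  exact integral_congr_ae (Filter.Eventually.of_forall h1)
end
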